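/- Suppose (P1)–(P7) hold and S(ξ) is a compact operator for every ξ ∈ (0,T]. Then for every θ ∈ C([0,T],Ω₂) the set Γ(θ) is equicontinuous: for every ε > 0 there exists δ > 0 such that for all y ∈ Γ(θ) and all ξ₁, ξ₂ ∈ [0,T] with |ξ₂ − ξ₁| ≤ δ one has ‖y(ξ₂) − y(ξ₁)‖_{Ω₂} ≤ ε. -/

import Mathlib

/-! Every `y ∈ Γ(θ)` has the form `y ξ = S ξ (h θ) + ∫₀^ξ P(ξ - s) F(s) ds` with forcing term
`F = B(·, θ) l + f(·, θ)`. Coercivity (P3) bounds the solutions of the variational inequality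
uniformly for bounded data, and (P4) bounds the data, so all admissible `l` share one bound `M`
and all forcing terms are dominated by one integrable `ρ`, independent of `y`. The first summand
is uniformly continuous since `S` is strongly continuous, and the integrals are equicontinuous
over all `F` dominated by `ρ`: cut the integral at `ξ - η`; on the far part `ξ - s ≥ η`, where
the kernel is uniformly continuous, and the near part is small by absolute continuity of `∫ ρ`. -/

open MeasureTheory Set Filter Topology
open scoped ENNReal

noncomputable section

/-- `SOL K G φ w` is the solution set `SOL(K, w + G(·), φ)` of the generalized mixed
variational inequality: all `u ∈ K` with `⟨w + G(u), v - u⟩ + φ(v) - φ(u) ≥ 0` for all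
`v ∈ K` (written without `EReal` subtraction as `φ(u) ≤ ⟨w + G(u), v - u⟩ + φ(v)`). -/
def SOL {Ω₁ : Type*} [NormedAddCommGroup Ω₁] [NormedSpace ℝ Ω₁]
    (K : Set Ω₁) (G : Ω₁ → (Ω₁ →L[ℝ] ℝ)) (φ : Ω₁ → EReal) (w : Ω₁ →L[ℝ] ℝ) : Set Ω₁ :=
  {u | u ∈ K ∧ ∀ v ∈ K, φ u ≤ ((w (v - u) + (G u) (v - u) : ℝ) : EReal) + φ v}

/-- (P1): `G` is monotone on `K` and hemicontinuous on `K`. -/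
def condP1 {Ω₁ : Type*} [NormedAddCommGroup Ω₁] [NormedSpace ℝ Ω₁]
    (K : Set Ω₁) (G : Ω₁ → (Ω₁ →L[ℝ] ℝ)) : Prop :=
  (∀ u ∈ K, ∀ v ∈ K, 0 ≤ (G v - G u) (v - u)) ∧
  (∀ u ∈ K, ∀ v ∈ K, ∀ x : Ω₁,
    ContinuousOn (fun t : ℝ => (G (u + t • (v - u))) x) (Icc (0:ℝ) 1))

/-- (P2): `φ : Ω₁ → ℝ ∪ {+∞}` (an `EReal`-valued map never taking the value `⊥`) is
proper, convex and lower semicontinuous. -/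
def condP2 {Ω₁ : Type*} [NormedAddCommGroup Ω₁] [NormedSpace ℝ Ω₁] (φ : Ω₁ → EReal) : Prop :=
  (∀ u, φ u ≠ ⊥) ∧ (∃ u, φ u ≠ ⊤) ∧
  (∀ u v : Ω₁, ∀ t : ℝ, t ∈ Icc (0:ℝ) 1 →
    φ (t • u + (1 - t) • v) ≤ (t : EReal) * φ u + ((1 - t : ℝ) : EReal) * φ v) ∧
  LowerSemicontinuous φ

/-- (P3): coercivity: there is `v* ∈ K ∩ D(φ)` with
`(⟨G(u), u - v*⟩ + φ(u) - φ(v*))/‖u‖ → +∞` as `‖u‖ → ∞`, `u ∈ K`. -/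
def condP3 {Ω₁ : Type*} [NormedAddCommGroup Ω₁] [NormedSpace ℝ Ω₁]
    (K : Set Ω₁) (G : Ω₁ → (Ω₁ →L[ℝ] ℝ)) (φ : Ω₁ → EReal) : Prop :=
  ∃ vs ∈ K, φ vs ≠ ⊤ ∧
    ∀ M : ℝ, ∃ R : ℝ, ∀ u ∈ K, R ≤ ‖u‖ →
      ((M * ‖u‖ : ℝ) : EReal) + φ vs ≤ (((G u) (u - vs) : ℝ) : EReal) + φ u

/-- (P4): `g` is continuous and bounded on `[0,T] × Ω₂`. -/
def condP4 {Ω₁ Ω₂ : Type*} [NormedAddCommGroup Ω₁] [NormedSpace ℝ Ω₁]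
    [NormedAddCommGroup Ω₂] [NormedSpace ℝ Ω₂]
    (T : ℝ) (g : ℝ → Ω₂ → (Ω₁ →L[ℝ] ℝ)) : Prop :=
  ContinuousOn (fun p : ℝ × Ω₂ => g p.1 p.2) (Icc (0:ℝ) T ×ˢ univ) ∧
  ∃ C : ℝ, ∀ ξ ∈ Icc (0:ℝ) T, ∀ θ : Ω₂, ‖g ξ θ‖ ≤ C

/-- Extension of `θ ∈ C([0,T], Ω₂)` to all of `ℝ` by projecting onto `[0,T]`
(only its values on `[0,T]` are ever used). -/
def extIcc {Ω₂ : Type*} [TopologicalSpace Ω₂] {T : ℝ} (hT : (0:ℝ) ≤ T)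
    (θ : C(Icc (0:ℝ) T, Ω₂)) (s : ℝ) : Ω₂ :=
  θ (Set.projIcc 0 T hT s)

/-- (P5): Carathéodory conditions and the growth bound for `B`. -/
def condP5 {Ω₁ Ω₂ : Type*} [NormedAddCommGroup Ω₁] [NormedSpace ℝ Ω₁]
    [NormedAddCommGroup Ω₂] [NormedSpace ℝ Ω₂]
    (T : ℝ) (B : ℝ → Ω₂ → (Ω₁ →L[ℝ] Ω₂)) (ρB ΥB : ℝ → ℝ) : Prop :=
  (∀ θ : Ω₂, AEStronglyMeasurable (fun ξ => B ξ θ) (volume.restrict (Icc (0:ℝ) T))) ∧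
  (∀ᵐ ξ ∂(volume.restrict (Icc (0:ℝ) T)), Continuous fun θ : Ω₂ => B ξ θ) ∧
  (∀ ξ, 0 ≤ ρB ξ) ∧ MemLp ρB 2 (volume.restrict (Icc (0:ℝ) T)) ∧
  MonotoneOn ΥB (Ici (0:ℝ)) ∧ ContinuousOn ΥB (Ici (0:ℝ)) ∧ (∀ k ∈ Ici (0:ℝ), 0 ≤ ΥB k) ∧
  (∀ ξ ∈ Icc (0:ℝ) T, ∀ θ : Ω₂, ‖B ξ θ‖ ≤ ρB ξ * ΥB ‖θ‖)

/-- (P6): `h` is continuous and `‖h θ‖ ≤ Υ_h(‖θ‖_c)`. -/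
def condP6 {Ω₂ : Type*} [NormedAddCommGroup Ω₂] [NormedSpace ℝ Ω₂]
    (T : ℝ) (h : C(Icc (0:ℝ) T, Ω₂) → Ω₂) (Υh : ℝ → ℝ) : Prop :=
  Continuous h ∧
  MonotoneOn Υh (Ici (0:ℝ)) ∧ ContinuousOn Υh (Ici (0:ℝ)) ∧ (∀ k ∈ Ici (0:ℝ), 0 ≤ Υh k) ∧
  ∀ θ : C(Icc (0:ℝ) T, Ω₂), ‖h θ‖ ≤ Υh ‖θ‖

/-- (P7): measurability and the Lipschitz-type conditions for `f`. -/
def condP7 {Ω₂ : Type*} [NormedAddCommGroup Ω₂] [NormedSpace ℝ Ω₂]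
    (T : ℝ) (f : ℝ → Ω₂ → Ω₂) (ρf : ℝ → ℝ) : Prop :=
  (∀ θ : Ω₂, AEStronglyMeasurable (fun ξ => f ξ θ) (volume.restrict (Icc (0:ℝ) T))) ∧
  (∀ ξ, 0 ≤ ρf ξ) ∧ MemLp ρf 2 (volume.restrict (Icc (0:ℝ) T)) ∧
  (∀ᵐ ξ ∂(volume.restrict (Icc (0:ℝ) T)),
    (∀ θ y : Ω₂, ‖f ξ θ - f ξ y‖ ≤ ρf ξ * ‖θ - y‖) ∧ ‖f ξ 0‖ ≤ ρf ξ)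

/-- The operator families `S` (playing the role of `E_α(ξ^α A)`) and `P`
(playing the role of `ξ^{α-1} E_{α,α}(ξ^α A)`): `S 0 = I`, strong continuity of `S` on
`[0,T]`, operator-norm continuity of `S` and `P` on `(0,T]`, and boundedness. -/
def SPfamily {Ω₂ : Type*} [NormedAddCommGroup Ω₂] [NormedSpace ℝ Ω₂]
    (T : ℝ) (S P : ℝ → (Ω₂ →L[ℝ] Ω₂)) : Prop :=
  S 0 = ContinuousLinearMap.id ℝ Ω₂ ∧
  (∀ x : Ω₂, ContinuousOn (fun ξ => S ξ x) (Icc (0:ℝ) T)) ∧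
  ContinuousOn S (Ioc (0:ℝ) T) ∧ ContinuousOn P (Ioc (0:ℝ) T) ∧
  BddAbove (range fun ξ : Icc (0:ℝ) T => ‖S ξ.1‖) ∧
  BddAbove (range fun ξ : Ioc (0:ℝ) T => ‖P ξ.1‖)

/-- `Θ_A := max( sup_{ξ ∈ [0,T]} ‖S ξ‖, sup_{ξ ∈ (0,T]} ‖P ξ‖ )`. -/
def ThetaA {Ω₂ : Type*} [NormedAddCommGroup Ω₂] [NormedSpace ℝ Ω₂]
    (T : ℝ) (S P : ℝ → (Ω₂ →L[ℝ] Ω₂)) : ℝ :=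
  max (⨆ ξ : Icc (0:ℝ) T, ‖S ξ.1‖) (⨆ ξ : Ioc (0:ℝ) T, ‖P ξ.1‖)

/-- The `L²([0,T])`-norm of a (nonnegative) scalar function. -/
def L2norm (T : ℝ) (ρ : ℝ → ℝ) : ℝ :=
  Real.sqrt (∫ s in Icc (0:ℝ) T, (ρ s) ^ 2)

/-- The solution multimap `Γ`:
`Γ(θ) = { y : y(ξ) = S(ξ)h(θ) + ∫₀^ξ P(ξ-s)(B(s,θ(s))l(s) + f(s,θ(s))) ds, l ∈ P_U(θ) }`. -/
def GammaMap {Ω₁ Ω₂ : Type*} [NormedAddCommGroup Ω₁] [NormedSpace ℝ Ω₁]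
    [NormedAddCommGroup Ω₂] [NormedSpace ℝ Ω₂]
    (K : Set Ω₁) (G : Ω₁ → (Ω₁ →L[ℝ] ℝ)) (φ : Ω₁ → EReal)
    {T : ℝ} (hT : (0:ℝ) ≤ T) (g : ℝ → Ω₂ → (Ω₁ →L[ℝ] ℝ))
    (S P : ℝ → (Ω₂ →L[ℝ] Ω₂)) (B : ℝ → Ω₂ → (Ω₁ →L[ℝ] Ω₂))
    (h : C(Icc (0:ℝ) T, Ω₂) → Ω₂) (f : ℝ → Ω₂ → Ω₂)
    (θ : C(Icc (0:ℝ) T, Ω₂)) : Set C(Icc (0:ℝ) T, Ω₂) :=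
  {y | ∃ l : ℝ → Ω₁, MemLp l 2 (volume.restrict (Icc (0:ℝ) T)) ∧
    (∀ᵐ ξ ∂(volume.restrict (Icc (0:ℝ) T)), l ξ ∈ SOL K G φ (g ξ (extIcc hT θ ξ))) ∧
    ∀ ξ : Icc (0:ℝ) T, y ξ = S ξ.1 (h θ) +
      ∫ s in (0:ℝ)..(ξ.1), P (ξ.1 - s) ((B s (extIcc hT θ s)) (l s) + f s (extIcc hT θ s))}

section Caratheodory

variable {α E F : Type*} [MeasurableSpace α] {μ : Measure α} [NormedAddCommGroup F]
  {u : α → E → F}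

lemma aestronglyMeasurable_comp_simpleFunc (hu : ∀ c, AEStronglyMeasurable (fun s => u s c) μ)
    (φ : SimpleFunc α E) : AEStronglyMeasurable (fun s => u s (φ s)) μ := by
  have hsum : (fun s => u s (φ s)) = ∑ c ∈ φ.range, (φ ⁻¹' {c}).indicator (fun s => u s c) := by
    ext s
    rw [Finset.sum_apply, Finset.sum_eq_single (φ s)]
    · simp
    · intro c _ hc
      exact indicator_of_notMem (fun hs => hc hs.symm) _
    · exact fun h => absurd (φ.mem_range_self s) h
  rw [hsum]
  exact Finset.aestronglyMeasurable_sum _ fun c _ => (hu c).indicator (φ.measurableSet_preimage _)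

lemma aestronglyMeasurable_comp_of_caratheodory [TopologicalSpace E]
    (hu : ∀ c, AEStronglyMeasurable (fun s => u s c) μ) (hcont : ∀ᵐ s ∂μ, Continuous (u s))
    {θ : α → E} (hθ : StronglyMeasurable θ) : AEStronglyMeasurable (fun s => u s (θ s)) μ :=
  aestronglyMeasurable_of_tendsto_ae atTop
    (fun n => aestronglyMeasurable_comp_simpleFunc hu (hθ.approx n))
    (hcont.mono fun s hs => (hs.tendsto _).comp (hθ.tendsto_approx s))

end Caratheodory

-- Test the inequality at `v = v*` and add it to the coercivity estimate: `G u` cancels and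
-- `(C + 1) ‖u‖ ≤ ⟨w, v* - u⟩ ≤ C (‖v*‖ + ‖u‖)` once `‖u‖` is large.
lemma exists_norm_le_of_mem_SOL {Ω : Type*} [NormedAddCommGroup Ω] [NormedSpace ℝ Ω]
    {K : Set Ω} {G : Ω → (Ω →L[ℝ] ℝ)} {φ : Ω → EReal} (hφ : ∀ u, φ u ≠ ⊥)
    (hP3 : condP3 K G φ) {C : ℝ} (hC : 0 ≤ C) :
    ∃ M, 0 ≤ M ∧ ∀ w : Ω →L[ℝ] ℝ, ‖w‖ ≤ C → ∀ u ∈ SOL K G φ w, ‖u‖ ≤ M := by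
  obtain ⟨vs, hvsK, hvs, hcoer⟩ := hP3
  obtain ⟨R, hR⟩ := hcoer (C + 1)
  refine ⟨max R (C * ‖vs‖), le_max_of_le_right (by positivity), fun w hw u ⟨huK, hsol⟩ => ?_⟩
  by_contra! hu
  have hRu : R ≤ ‖u‖ := (le_max_left _ _).trans hu.le
  have hcoer_u := hR u huK hRu
  have htest := hsol vs hvsK
  lift φ vs to ℝ using ⟨hvs, hφ vs⟩ with c
  have hu_top : φ u ≠ ⊤ := fun htop => by
    rw [htop, ← EReal.coe_add, top_le_iff] at htest
    exact EReal.coe_ne_top _ htest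
  lift φ u to ℝ using ⟨hu_top, hφ u⟩ with d
  have h1 : (C + 1) * ‖u‖ + c ≤ G u (u - vs) + d := mod_cast hcoer_u
  have h2 : d ≤ w (vs - u) + G u (vs - u) + c := mod_cast htest
  have hG : G u (u - vs) + G u (vs - u) = 0 := by rw [map_sub, map_sub]; ring
  have hw_le : w (vs - u) ≤ C * (‖vs‖ + ‖u‖) :=
    calc w (vs - u) ≤ ‖w‖ * ‖vs - u‖ := (le_abs_self _).trans (w.le_opNorm _)
      _ ≤ C * (‖vs‖ + ‖u‖) := mul_le_mul hw (norm_sub_le _ _) (norm_nonneg _) hC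
  have : ‖u‖ ≤ C * ‖vs‖ := by linarith
  exact absurd hu (not_lt.2 (this.trans (le_max_right _ _)))

section Forcing

def forcingBound (ρB ΥB ρf : ℝ → ℝ) (R M s : ℝ) : ℝ := ΥB R * M * ρB s + (1 + R) * ρf s

variable {Ω₁ Ω₂ : Type*} [NormedAddCommGroup Ω₁] [NormedSpace ℝ Ω₁] [NormedAddCommGroup Ω₂]
  [NormedSpace ℝ Ω₂] {T : ℝ} {B : ℝ → Ω₂ → (Ω₁ →L[ℝ] Ω₂)} {ρB ΥB : ℝ → ℝ}
  {f : ℝ → Ω₂ → Ω₂} {ρf : ℝ → ℝ} {θ : ℝ → Ω₂} {l : ℝ → Ω₁}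

lemma aestronglyMeasurable_forcing (hP5 : condP5 T B ρB ΥB) (hP7 : condP7 T f ρf)
    (hθ : Continuous θ) (hl : AEStronglyMeasurable l (volume.restrict (Icc 0 T))) :
    AEStronglyMeasurable (fun s => B s (θ s) (l s) + f s (θ s)) (volume.restrict (Icc 0 T)) := by
  have hfcont : ∀ᵐ s ∂volume.restrict (Icc (0:ℝ) T), Continuous (f s) :=
    hP7.2.2.2.mono fun s hs => (LipschitzWith.of_dist_le' fun x y => by
      simpa only [dist_eq_norm] using hs.1 x y).continuous
  have hB := aestronglyMeasurable_comp_of_caratheodory hP5.1 hP5.2.1 hθ.stronglyMeasurable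
  have hf := aestronglyMeasurable_comp_of_caratheodory hP7.1 hfcont hθ.stronglyMeasurable
  exact ((ContinuousLinearMap.id ℝ _).aestronglyMeasurable_comp₂ hB hl).add hf

lemma ae_norm_forcing_le (hP5 : condP5 T B ρB ΥB) (hP7 : condP7 T f ρf) {R M : ℝ}
    (hθ : ∀ s, ‖θ s‖ ≤ R) (hl : ∀ᵐ s ∂volume.restrict (Icc 0 T), ‖l s‖ ≤ M) :
    ∀ᵐ s ∂volume.restrict (Icc 0 T),
      ‖B s (θ s) (l s) + f s (θ s)‖ ≤ forcingBound ρB ΥB ρf R M s := by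
  obtain ⟨-, -, hρB0, -, hΥBmono, -, hΥB0, hBle⟩ := hP5
  have hR : 0 ≤ R := (norm_nonneg _).trans (hθ 0)
  filter_upwards [hl, hP7.2.2.2, ae_restrict_mem measurableSet_Icc] with s hls ⟨hlip, hf0⟩ hs
  have hB : ‖B s (θ s)‖ ≤ ρB s * ΥB R :=
    (hBle s hs _).trans (mul_le_mul_of_nonneg_left
      (hΥBmono (norm_nonneg _) hR (hθ s)) (hρB0 s))
  have hf : ‖f s (θ s)‖ ≤ (1 + R) * ρf s :=
    calc ‖f s (θ s)‖ ≤ ‖f s (θ s) - f s 0‖ + ‖f s 0‖ := norm_le_norm_sub_add _ _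
      _ ≤ ρf s * ‖θ s - 0‖ + ρf s := add_le_add (hlip _ 0) hf0
      _ ≤ (1 + R) * ρf s := by
        rw [sub_zero]; nlinarith [hθ s, hP7.2.1 s]
  calc ‖B s (θ s) (l s) + f s (θ s)‖ ≤ ‖B s (θ s)‖ * ‖l s‖ + ‖f s (θ s)‖ :=
        (norm_add_le _ _).trans (add_le_add_left ((B s (θ s)).le_opNorm _) _)
    _ ≤ forcingBound ρB ΥB ρf R M s := by
        have := mul_le_mul hB hls (norm_nonneg _) (mul_nonneg (hρB0 s) (hΥB0 R hR))
        rw [forcingBound]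
        linarith

lemma integrableOn_forcingBound (hP5 : condP5 T B ρB ΥB) (hP7 : condP7 T f ρf) (R M : ℝ) :
    IntegrableOn (forcingBound ρB ΥB ρf R M) (Icc 0 T) :=
  ((hP5.2.2.2.1.const_mul _).add (hP7.2.2.1.const_mul _)).integrable one_le_two

lemma forcingBound_nonneg (hP5 : condP5 T B ρB ΥB) (hP7 : condP7 T f ρf) {R M : ℝ}
    (hR : 0 ≤ R) (hM : 0 ≤ M) (s : ℝ) : 0 ≤ forcingBound ρB ΥB ρf R M s := by
  obtain ⟨-, -, hρB0, -, -, -, hΥB0, -⟩ := hP5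
  exact add_nonneg (mul_nonneg (mul_nonneg (hΥB0 R hR) hM) (hρB0 s))
    (mul_nonneg (by linarith) (hP7.2.1 s))

end Forcing

lemma mul_div_add_one_le {c x : ℝ} (hc : 0 ≤ c) (hx : 0 ≤ x) : c * (x / (c + 1)) ≤ x := by
  rw [mul_div_assoc', div_le_iff₀ (by linarith)]
  nlinarith

lemma exists_intervalIntegral_le_of_sub_le {ρ : ℝ → ℝ} {a b ε : ℝ}
    (hρ : IntegrableOn ρ (Icc a b)) (hε : 0 < ε) :
    ∃ δ > 0, ∀ x ∈ Icc a b, ∀ y ∈ Icc a b, x ≤ y → y - x ≤ δ → ∫ s in x..y, ρ s ≤ ε := by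
  have hρ_int : ∀ x ∈ Icc a b, IntervalIntegrable ρ volume a x := fun x hx =>
    (hρ.mono_set (uIcc_subset_Icc (left_mem_Icc.2 (hx.1.trans hx.2)) hx)).intervalIntegrable
  have hΦ : ContinuousOn (fun x => ∫ s in a..x, ρ s) (Icc a b) :=
    (intervalIntegral.continuousOn_primitive hρ).congr fun x hx =>
      intervalIntegral.integral_of_le hx.1
  obtain ⟨δ, hδ, hΦδ⟩ := Metric.uniformContinuousOn_iff_le.1
    (isCompact_Icc.uniformContinuousOn_of_continuous hΦ) ε hε
  refine ⟨δ, hδ, fun x hx y hy hxy hyx => ?_⟩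
  rw [← intervalIntegral.integral_interval_sub_left (hρ_int y hy) (hρ_int x hx)]
  have hd := hΦδ y hy x hx (by rwa [Real.dist_eq, abs_of_nonneg (sub_nonneg.2 hxy)])
  rw [Real.dist_eq] at hd
  exact (le_abs_self _).trans hd

section Volterra

variable {E E' : Type*} [NormedAddCommGroup E] [NormedSpace ℝ E] [NormedAddCommGroup E']
  [NormedSpace ℝ E']

section Dominated

variable {K : ℝ → E →L[ℝ] E'} {F : ℝ → E} {ρ : ℝ → ℝ} {s : Set ℝ} {a b c : ℝ}

lemma ae_norm_clm_apply_le (hsub : Ioc a b ⊆ s) (hKc : ∀ t ∈ Ioo a b, ‖K t‖ ≤ c)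
    (hFρ : ∀ᵐ t ∂volume.restrict s, ‖F t‖ ≤ ρ t) :
    ∀ᵐ t ∂volume.restrict (Ioc a b), ‖K t (F t)‖ ≤ c * ρ t := by
  rw [← Measure.restrict_congr_set Ioo_ae_eq_Ioc]
  filter_upwards [ae_restrict_of_ae_restrict_of_subset (Ioo_subset_Ioc_self.trans hsub) hFρ,
    ae_restrict_mem measurableSet_Ioo] with t hFt ht
  calc ‖K t (F t)‖ ≤ ‖K t‖ * ‖F t‖ := (K t).le_opNorm _
    _ ≤ c * ρ t := mul_le_mul (hKc t ht) hFt (norm_nonneg _) ((norm_nonneg _).trans (hKc t ht))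

lemma intervalIntegrable_clm_apply (hab : a ≤ b) (hsub : Ioc a b ⊆ s)
    (hK : ContinuousOn K (Ioo a b)) (hKc : ∀ t ∈ Ioo a b, ‖K t‖ ≤ c)
    (hF : AEStronglyMeasurable F (volume.restrict s))
    (hFρ : ∀ᵐ t ∂volume.restrict s, ‖F t‖ ≤ ρ t) (hρ : IntegrableOn ρ s) :
    IntervalIntegrable (fun t => K t (F t)) volume a b := by
  have hKm : AEStronglyMeasurable K (volume.restrict (Ioc a b)) := by
    rw [← Measure.restrict_congr_set Ioo_ae_eq_Ioc]
    exact hK.aestronglyMeasurable measurableSet_Ioo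
  rw [intervalIntegrable_iff_integrableOn_Ioc_of_le hab]
  exact Integrable.mono' ((hρ.mono_set hsub).const_mul c)
    ((ContinuousLinearMap.id ℝ _).aestronglyMeasurable_comp₂ hKm (hF.mono_set hsub))
    (ae_norm_clm_apply_le hsub hKc hFρ)

lemma norm_intervalIntegral_clm_apply_le (hab : a ≤ b) (hsub : Ioc a b ⊆ s)
    (hKc : ∀ t ∈ Ioo a b, ‖K t‖ ≤ c) (hFρ : ∀ᵐ t ∂volume.restrict s, ‖F t‖ ≤ ρ t)
    (hρ : IntegrableOn ρ s) : ‖∫ t in a..b, K t (F t)‖ ≤ c * ∫ t in a..b, ρ t := by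
  rw [← intervalIntegral.integral_const_mul]
  refine intervalIntegral.norm_integral_le_of_norm_le hab
    ((ae_restrict_iff' measurableSet_Ioc).1 (ae_norm_clm_apply_le hsub hKc hFρ)) ?_
  rw [intervalIntegrable_iff_integrableOn_Ioc_of_le hab]
  exact (hρ.mono_set hsub).const_mul c

end Dominated

def volterra (P : ℝ → E →L[ℝ] E') (F : ℝ → E) (ξ : ℝ) : E' :=
  ∫ s in (0:ℝ)..ξ, P (ξ - s) (F s)

lemma volterra_sub_eq {P : ℝ → E →L[ℝ] E'} {F : ℝ → E} {a b m : ℝ}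
    (ha : IntervalIntegrable (fun s => P (a - s) (F s)) volume 0 a)
    (hb : IntervalIntegrable (fun s => P (b - s) (F s)) volume 0 b)
    (hm : m ∈ Icc 0 a) (hab : a ≤ b) :
    volterra P F b - volterra P F a = (∫ s in (0:ℝ)..m, (P (b - s) - P (a - s)) (F s))
      + (∫ s in m..b, P (b - s) (F s)) - ∫ s in m..a, P (a - s) (F s) := by
  have hmb : m ∈ uIcc 0 b := mem_uIcc_of_le hm.1 (hm.2.trans hab)
  have hma : m ∈ uIcc 0 a := mem_uIcc_of_le hm.1 hm.2
  have hb₁ := hb.mono_set (uIcc_subset_uIcc left_mem_uIcc hmb)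
  have hb₂ := hb.mono_set (uIcc_subset_uIcc hmb right_mem_uIcc)
  have ha₁ := ha.mono_set (uIcc_subset_uIcc left_mem_uIcc hma)
  have ha₂ := ha.mono_set (uIcc_subset_uIcc hma right_mem_uIcc)
  simp only [volterra, FunLike.coe_sub, Pi.sub_apply]
  rw [← intervalIntegral.integral_add_adjacent_intervals hb₁ hb₂,
    ← intervalIntegral.integral_add_adjacent_intervals ha₁ ha₂,
    intervalIntegral.integral_sub hb₁ ha₁]
  abel

section Kernel

variable {T CP : ℝ} {P : ℝ → E →L[ℝ] E'} {F : ℝ → E} {ρ : ℝ → ℝ} {ξ x y : ℝ}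

lemma sub_mem_Ioc_of_mem_Ioo {t : ℝ} (ht : t ∈ Ioo x y) (hx : 0 ≤ x) (hyξ : y ≤ ξ) (hξ : ξ ≤ T) :
    ξ - t ∈ Ioc 0 T :=
  ⟨by linarith [ht.2], by linarith [ht.1]⟩

lemma intervalIntegrable_volterra_integrand (hP : ContinuousOn P (Ioc 0 T))
    (hPb : ∀ t ∈ Ioc 0 T, ‖P t‖ ≤ CP) (hF : AEStronglyMeasurable F (volume.restrict (Icc 0 T)))
    (hFρ : ∀ᵐ s ∂volume.restrict (Icc 0 T), ‖F s‖ ≤ ρ s) (hρ : IntegrableOn ρ (Icc 0 T))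
    (hx : 0 ≤ x) (hxy : x ≤ y) (hyξ : y ≤ ξ) (hξ : ξ ≤ T) :
    IntervalIntegrable (fun s => P (ξ - s) (F s)) volume x y :=
  intervalIntegrable_clm_apply hxy (Ioc_subset_Icc_self.trans (Icc_subset_Icc hx (hyξ.trans hξ)))
    (hP.comp (continuousOn_const.sub continuousOn_id)
      fun _ ht => sub_mem_Ioc_of_mem_Ioo ht hx hyξ hξ)
    (fun _ ht => hPb _ (sub_mem_Ioc_of_mem_Ioo ht hx hyξ hξ)) hF hFρ hρ

lemma norm_integral_volterra_integrand_le (hPb : ∀ t ∈ Ioc 0 T, ‖P t‖ ≤ CP)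
    (hFρ : ∀ᵐ s ∂volume.restrict (Icc 0 T), ‖F s‖ ≤ ρ s) (hρ : IntegrableOn ρ (Icc 0 T))
    (hx : 0 ≤ x) (hxy : x ≤ y) (hyξ : y ≤ ξ) (hξ : ξ ≤ T) :
    ‖∫ s in x..y, P (ξ - s) (F s)‖ ≤ CP * ∫ s in x..y, ρ s :=
  norm_intervalIntegral_clm_apply_le hxy
    (Ioc_subset_Icc_self.trans (Icc_subset_Icc hx (hyξ.trans hξ)))
    (fun _ ht => hPb _ (sub_mem_Ioc_of_mem_Ioo ht hx hyξ hξ)) hFρ hρ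

lemma norm_volterra_sub_le (hP : ContinuousOn P (Ioc 0 T)) (hPb : ∀ t ∈ Ioc 0 T, ‖P t‖ ≤ CP)
    (hF : AEStronglyMeasurable F (volume.restrict (Icc 0 T)))
    (hFρ : ∀ᵐ s ∂volume.restrict (Icc 0 T), ‖F s‖ ≤ ρ s) (hρ : IntegrableOn ρ (Icc 0 T))
    {a b m κ : ℝ} (ha : a ∈ Icc 0 T) (hb : b ∈ Icc 0 T) (hab : a ≤ b) (hm : m ∈ Icc 0 a)
    (hκ : ∀ t ∈ Ioo 0 m, ‖P (b - t) - P (a - t)‖ ≤ κ) :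
    ‖volterra P F b - volterra P F a‖ ≤
      κ * (∫ s in (0:ℝ)..m, ρ s) + CP * (∫ s in m..b, ρ s) + CP * ∫ s in m..a, ρ s := by
  rw [volterra_sub_eq
    (intervalIntegrable_volterra_integrand hP hPb hF hFρ hρ le_rfl ha.1 le_rfl ha.2)
    (intervalIntegrable_volterra_integrand hP hPb hF hFρ hρ le_rfl hb.1 le_rfl hb.2) hm hab]
  refine (norm_sub_le _ _).trans (add_le_add ((norm_add_le _ _).trans (add_le_add ?_ ?_)) ?_)
  · exact norm_intervalIntegral_clm_apply_le hm.1
      (Ioc_subset_Icc_self.trans (Icc_subset_Icc le_rfl (hm.2.trans ha.2))) hκ hFρ hρ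
  · exact norm_integral_volterra_integrand_le hPb hFρ hρ hm.1 (hm.2.trans hab) le_rfl hb.2
  · exact norm_integral_volterra_integrand_le hPb hFρ hρ hm.1 hm.2 le_rfl ha.2

end Kernel

theorem volterra_equicontinuous {T CP : ℝ} {P : ℝ → E →L[ℝ] E'} {ρ : ℝ → ℝ} (hT : 0 < T)
    (hP : ContinuousOn P (Ioc 0 T)) (hPb : ∀ t ∈ Ioc 0 T, ‖P t‖ ≤ CP)
    (hρ : IntegrableOn ρ (Icc 0 T)) (hρ0 : ∀ s, 0 ≤ ρ s) {ε : ℝ} (hε : 0 < ε) :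
    ∃ δ > 0, ∀ F : ℝ → E, AEStronglyMeasurable F (volume.restrict (Icc 0 T)) →
      (∀ᵐ s ∂volume.restrict (Icc 0 T), ‖F s‖ ≤ ρ s) →
      ∀ a ∈ Icc 0 T, ∀ b ∈ Icc 0 T, |b - a| ≤ δ → ‖volterra P F b - volterra P F a‖ ≤ ε := by
  have hCP : 0 ≤ CP := (norm_nonneg _).trans (hPb T ⟨hT, le_rfl⟩)
  set Cρ := ∫ s in (0:ℝ)..T, ρ s
  have hCρ : 0 ≤ Cρ := intervalIntegral.integral_nonneg hT.le fun s _ => hρ0 s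
  obtain ⟨δ₁, hδ₁, hρδ⟩ := exists_intervalIntegral_le_of_sub_le hρ
    (show 0 < ε / 3 / (CP + 1) by positivity)
  have hnear : ∀ x ∈ Icc 0 T, ∀ y ∈ Icc 0 T, x ≤ y → y - x ≤ δ₁ →
      CP * ∫ s in x..y, ρ s ≤ ε / 3 := fun x hx y hy hxy hyx =>
    (mul_le_mul_of_nonneg_left (hρδ x hx y hy hxy hyx) hCP).trans
      (mul_div_add_one_le hCP (by positivity))
  have hPfar : ContinuousOn P (Icc (δ₁ / 2) T) :=
    hP.mono fun t ht => ⟨(half_pos hδ₁).trans_le ht.1, ht.2⟩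
  obtain ⟨δ₂, hδ₂, hPδ⟩ := Metric.uniformContinuousOn_iff_le.1
    (isCompact_Icc.uniformContinuousOn_of_continuous hPfar) (ε / 3 / (Cρ + 1)) (by positivity)
  refine ⟨min (δ₁ / 2) δ₂, by positivity, fun F hF hFρ a ha b hb hab => ?_⟩
  wlog hle : a ≤ b generalizing a b
  · rw [norm_sub_rev]
    exact this b hb a ha (by rwa [abs_sub_comm]) (le_of_not_ge hle)
  rw [abs_of_nonneg (sub_nonneg.2 hle)] at hab
  set m := max (a - δ₁ / 2) 0
  have hm : m ∈ Icc 0 a := ⟨le_max_right _ _, max_le (by linarith) ha.1⟩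
  have hmT : m ∈ Icc 0 T := ⟨hm.1, hm.2.trans ha.2⟩
  have ham : a - m ≤ δ₁ / 2 := by linarith [le_max_left (a - δ₁ / 2) 0]
  have hfar : ∀ t ∈ Ioo 0 m, ‖P (b - t) - P (a - t)‖ ≤ ε / 3 / (Cρ + 1) := by
    intro t ht
    have hta : t < a - δ₁ / 2 := (lt_max_iff.1 ht.2).resolve_right (not_lt.2 ht.1.le)
    have hd := hPδ (b - t) ⟨by linarith, by linarith [hb.2, ht.1]⟩
      (a - t) ⟨by linarith, by linarith [ha.2, ht.1]⟩
      (by rw [Real.dist_eq, sub_sub_sub_cancel_right, abs_of_nonneg (sub_nonneg.2 hle)]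
          exact hab.trans (min_le_right _ _))
    rwa [dist_eq_norm] at hd
  have hfar_int : ε / 3 / (Cρ + 1) * ∫ s in (0:ℝ)..m, ρ s ≤ ε / 3 :=
    calc _ ≤ ε / 3 / (Cρ + 1) * Cρ := by
          gcongr
          exact intervalIntegral.integral_mono_interval le_rfl hm.1 hmT.2
            (Eventually.of_forall hρ0) (hρ.mono_set (uIcc_of_le hT.le).subset).intervalIntegrable
      _ ≤ ε / 3 := by rw [mul_comm]; exact mul_div_add_one_le hCρ (by positivity)
  have := hnear m hmT b hb (hm.2.trans hle) (by linarith [min_le_left (δ₁ / 2) δ₂])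
  have := hnear m hmT a ha hm.2 (by linarith)
  linarith [norm_volterra_sub_le hP hPb hF hFρ hρ ha hb hle hm hfar]

end Volterra


theorem Gamma_equicontinuous_general
    {Ω₁ Ω₂ : Type*} [NormedAddCommGroup Ω₁] [NormedSpace ℝ Ω₁]
    [NormedAddCommGroup Ω₂] [NormedSpace ℝ Ω₂]
    (K : Set Ω₁)
    (G : Ω₁ → (Ω₁ →L[ℝ] ℝ)) (φ : Ω₁ → EReal)
    (hP2 : condP2 φ) (hP3 : condP3 K G φ)
    {T : ℝ} (hT : 0 < T)
    (g : ℝ → Ω₂ → (Ω₁ →L[ℝ] ℝ)) (hP4 : condP4 T g)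
    (S P : ℝ → (Ω₂ →L[ℝ] Ω₂)) (hSP : SPfamily T S P)
    (B : ℝ → Ω₂ → (Ω₁ →L[ℝ] Ω₂)) (ρB ΥB : ℝ → ℝ) (hP5 : condP5 T B ρB ΥB)
    (h : C(Icc (0:ℝ) T, Ω₂) → Ω₂)
    (f : ℝ → Ω₂ → Ω₂) (ρf : ℝ → ℝ) (hP7 : condP7 T f ρf)
    : ∀ θ : C(Icc (0:ℝ) T, Ω₂), ∀ ε : ℝ, 0 < ε → ∃ δ : ℝ, 0 < δ ∧
      ∀ y ∈ GammaMap K G φ hT.le g S P B h f θ, ∀ ξ₁ ξ₂ : Icc (0:ℝ) T,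
        |ξ₂.1 - ξ₁.1| ≤ δ → ‖y ξ₂ - y ξ₁‖ ≤ ε := by
  intro θ ε hε
  obtain ⟨-, hSc, -, hPc, -, CP, hCP⟩ := hSP
  obtain ⟨-, C, hgC⟩ := hP4
  obtain ⟨M, hM0, hM⟩ := exists_norm_le_of_mem_SOL hP2.1 hP3
    ((norm_nonneg _).trans (hgC 0 (left_mem_Icc.2 hT.le) 0))
  obtain ⟨δS, hδS, hSδ⟩ := Metric.uniformContinuousOn_iff_le.1
    (isCompact_Icc.uniformContinuousOn_of_continuous (hSc (h θ))) (ε / 2) (half_pos hε)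
  obtain ⟨δV, hδV, hVδ⟩ := volterra_equicontinuous hT hPc (fun t ht => hCP ⟨⟨t, ht⟩, rfl⟩)
    (integrableOn_forcingBound hP5 hP7 ‖θ‖ M) (forcingBound_nonneg hP5 hP7 (norm_nonneg θ) hM0)
    (half_pos hε)
  refine ⟨min δS δV, lt_min hδS hδV, fun y ⟨l, hl, hlSOL, hy⟩ ξ₁ ξ₂ hξ => ?_⟩
  have hθc : Continuous (extIcc hT.le θ) := θ.continuous.comp continuous_projIcc
  have hl_le : ∀ᵐ s ∂volume.restrict (Icc 0 T), ‖l s‖ ≤ M := by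
    filter_upwards [hlSOL, ae_restrict_mem measurableSet_Icc] with s hs hsT
    exact hM _ (hgC s hsT _) _ hs
  have hV := hVδ _ (aestronglyMeasurable_forcing hP5 hP7 hθc hl.aestronglyMeasurable)
    (ae_norm_forcing_le hP5 hP7 (fun s => θ.norm_coe_le_norm _) hl_le)
    ξ₁.1 ξ₁.2 ξ₂.1 ξ₂.2 (hξ.trans (min_le_right _ _))
  have hS := hSδ ξ₂.1 ξ₂.2 ξ₁.1 ξ₁.2 (hξ.trans (min_le_left _ _))
  rw [dist_eq_norm] at hS
  rw [hy, hy, add_sub_add_comm]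
  exact (norm_add_le _ _).trans (add_halves ε ▸ add_le_add hS hV)

/-- **Equicontinuity of `Γ(θ)`** under (P1)–(P7) and compactness of `S(ξ)`, `ξ ∈ (0,T]`. -/
theorem Gamma_equicontinuous
    {Ω₁ Ω₂ : Type*} [NormedAddCommGroup Ω₁] [NormedSpace ℝ Ω₁] [CompleteSpace Ω₁]
    [TopologicalSpace.SeparableSpace Ω₁]
    [NormedAddCommGroup Ω₂] [NormedSpace ℝ Ω₂] [CompleteSpace Ω₂]
    [TopologicalSpace.SeparableSpace Ω₂]
    (hΩ₁refl : Function.Surjective ⇑(NormedSpace.inclusionInDoubleDual ℝ Ω₁))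
    (hΩ₂refl : Function.Surjective ⇑(NormedSpace.inclusionInDoubleDual ℝ Ω₂))
    (K : Set Ω₁) (hKne : K.Nonempty) (hKcl : IsClosed K) (hKcv : Convex ℝ K)
    (G : Ω₁ → (Ω₁ →L[ℝ] ℝ)) (φ : Ω₁ → EReal)
    (hP1 : condP1 K G) (hP2 : condP2 φ) (hP3 : condP3 K G φ)
    {T : ℝ} (hT : 0 < T)
    (g : ℝ → Ω₂ → (Ω₁ →L[ℝ] ℝ)) (hP4 : condP4 T g)
    (hSOLne : ∀ w : Ω₁ →L[ℝ] ℝ, (SOL K G φ w).Nonempty)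
    {α : ℝ} (hα : α ∈ Ioo (0:ℝ) 1)
    (S P : ℝ → (Ω₂ →L[ℝ] Ω₂)) (hSP : SPfamily T S P)
    (B : ℝ → Ω₂ → (Ω₁ →L[ℝ] Ω₂)) (ρB ΥB : ℝ → ℝ) (hP5 : condP5 T B ρB ΥB)
    (h : C(Icc (0:ℝ) T, Ω₂) → Ω₂) (Υh : ℝ → ℝ) (hP6 : condP6 T h Υh)
    (f : ℝ → Ω₂ → Ω₂) (ρf : ℝ → ℝ) (hP7 : condP7 T f ρf)
    (hScpt : ∀ ξ ∈ Ioc (0:ℝ) T, IsCompactOperator (S ξ))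
    : ∀ θ : C(Icc (0:ℝ) T, Ω₂), ∀ ε : ℝ, 0 < ε → ∃ δ : ℝ, 0 < δ ∧
      ∀ y ∈ GammaMap K G φ hT.le g S P B h f θ, ∀ ξ₁ ξ₂ : Icc (0:ℝ) T,
        |ξ₂.1 - ξ₁.1| ≤ δ → ‖y ξ₂ - y ξ₁‖ ≤ ε :=
  Gamma_equicontinuous_general K G φ hP2 hP3 hT g hP4 S P hSP B ρB ΥB hP5 h f ρf hP7
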